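/- A closed walk is even-visiting if and only if all of its up-crossing counts are even: for a closed walk s of length L, every site x ≠ 0 is visited an even number of times if and only if for every j ∈ ℤ the up-crossing count u(j) is even. -/

import Mathlib

/-- A walk of length `L`: a function `s : Fin (L+1) → ℤ` with `s 0 = 0` and
unit steps `|s (i+1) - s i| = 1` for all `i < L`. -/
def IsWalk (L : ℕ) (s : Fin (L + 1) → ℤ) : Prop :=
  s 0 = 0 ∧ ∀ i : Fin L, |s i.succ - s i.castSucc| = 1

/-- A closed walk: a walk that ends at the origin. -/
def IsClosedWalk (L : ℕ) (s : Fin (L + 1) → ℤ) : Prop :=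
  IsWalk L s ∧ s (Fin.last L) = 0

/-- The number of visits of the walk `s` to the site `x`. -/
def visits (L : ℕ) (s : Fin (L + 1) → ℤ) (x : ℤ) : ℕ :=
  Fintype.card {i : Fin (L + 1) // s i = x}

/-- A walk is even-visiting if every site different from `0` is visited an
even number of times. -/
def EvenVisiting (L : ℕ) (s : Fin (L + 1) → ℤ) : Prop :=
  ∀ x : ℤ, x ≠ 0 → Even (visits L s x)

/-- The up-crossing count `u(j)`: the number of indices `i < L` with
`s i = j` and `s (i+1) = j + 1`. -/
def upcross (L : ℕ) (s : Fin (L + 1) → ℤ) (j : ℤ) : ℕ :=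
  Fintype.card {i : Fin L // s i.castSucc = j ∧ s i.succ = j + 1}


/-!
A closed walk crosses each edge `{j, j + 1}` upwards as often as downwards: the indicator of
`j < s i` changes exactly at these crossings and has the same value at both ends. Since the walk
ends at `0`, every visit to a site `x ≠ 0` is followed by a step to `x + 1` or to `x - 1`, so
`visits x = u(x) + u(x - 1)`. This gives one direction at once; for the other, the parity of
`u(j)` propagates from the sites far from the walk, where `u(j) = 0`, inwards to `0`.
-/

open Finset

theorem Fin.sum_univ_succ_sub_castSucc {M : Type*} [AddCommGroup M] {n : ℕ}
    (f : Fin (n + 1) → M) : ∑ i : Fin n, (f i.succ - f i.castSucc) = f (Fin.last n) - f 0 := by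
  have hsucc := Fin.sum_univ_succ f
  have hcast := Fin.sum_univ_castSucc f
  rw [sum_sub_distrib, eq_sub_of_add_eq' hsucc.symm, eq_sub_of_add_eq hcast.symm]
  abel

theorem Int.forall_of_forall_le_abs_of_iff_sub_one {P : ℤ → Prop} {N : ℤ}
    (hfar : ∀ j, N ≤ |j| → P j) (hstep : ∀ x ≠ 0, P x ↔ P (x - 1)) (j : ℤ) : P j := by
  suffices ∀ n : ℕ, ∀ j : ℤ, N ≤ |j| + n → P j from
    this N.toNat j (by have := abs_nonneg j; omega)
  intro n
  induction n with
  | zero => simpa using hfar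
  | succ n ih =>
    intro j hj
    push_cast at hj
    rcases le_or_gt 0 j with hj0 | hj0
    · have habs : |j + 1| = |j| + 1 := by rw [abs_of_nonneg hj0, abs_of_nonneg (by omega)]
      simpa using (hstep (j + 1) (by omega)).1 (ih (j + 1) (by omega))
    · have habs : |j - 1| = |j| + 1 := by rw [abs_of_neg hj0, abs_of_neg (by omega)]; ring
      exact (hstep j hj0.ne).2 (ih (j - 1) (by omega))

theorem exists_upcross_eq_zero_of_le_abs (L : ℕ) (s : Fin (L + 1) → ℤ) :
    ∃ N : ℤ, ∀ j, N ≤ |j| → upcross L s j = 0 := by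
  obtain ⟨M, hM⟩ := (Set.finite_range fun i => |s i|).bddAbove
  refine ⟨M + 1, fun j hj => Fintype.card_eq_zero_iff.mpr ⟨fun ⟨i, hi, _⟩ => ?_⟩⟩
  have : |s i.castSucc| ≤ M := hM ⟨i.castSucc, rfl⟩
  rw [hi] at this
  omega

def downcross (L : ℕ) (s : Fin (L + 1) → ℤ) (j : ℤ) : ℕ :=
  Fintype.card {i : Fin L // s i.castSucc = j + 1 ∧ s i.succ = j}

section UnitSteps

variable {L : ℕ} {s : Fin (L + 1) → ℤ}

theorem upcross_sub_downcross (hstep : ∀ i : Fin L, |s i.succ - s i.castSucc| = 1) (j : ℤ) :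
    (upcross L s j : ℤ) - downcross L s j =
      (if j < s (Fin.last L) then 1 else 0) - (if j < s 0 then 1 else 0) := by
  have hterm : ∀ i : Fin L,
      ((if s i.castSucc = j ∧ s i.succ = j + 1 then 1 else 0) -
        (if s i.castSucc = j + 1 ∧ s i.succ = j then 1 else 0) : ℤ) =
      (if j < s i.succ then 1 else 0) - (if j < s i.castSucc then 1 else 0) := by
    intro i
    have := abs_eq_abs.mp ((hstep i).trans abs_one.symm)
    split_ifs <;> omega
  simp only [upcross, downcross, Fintype.card_subtype, card_filter]
  push_cast
  rw [← sum_sub_distrib, sum_congr rfl fun i _ => hterm i,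
    Fin.sum_univ_succ_sub_castSucc fun k => if j < s k then (1 : ℤ) else 0]

theorem upcross_eq_downcross (hstep : ∀ i : Fin L, |s i.succ - s i.castSucc| = 1)
    (hclosed : s 0 = s (Fin.last L)) (j : ℤ) : upcross L s j = downcross L s j := by
  have := upcross_sub_downcross hstep j
  rw [hclosed, sub_self] at this
  omega

theorem visits_eq_upcross_add_downcross (hstep : ∀ i : Fin L, |s i.succ - s i.castSucc| = 1)
    {x : ℤ} (hx : s (Fin.last L) ≠ x) :
    visits L s x = upcross L s x + downcross L s (x - 1) := by
  have hterm : ∀ i : Fin L, (if s i.castSucc = x then 1 else 0) =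
      (if s i.castSucc = x ∧ s i.succ = x + 1 then 1 else 0) +
        (if s i.castSucc = x - 1 + 1 ∧ s i.succ = x - 1 then 1 else 0) := by
    intro i
    have := abs_eq_abs.mp ((hstep i).trans abs_one.symm)
    split_ifs <;> omega
  simp only [visits, upcross, downcross, Fintype.card_subtype, card_filter]
  rw [Fin.sum_univ_castSucc, if_neg hx, add_zero, sum_congr rfl fun i _ => hterm i,
    sum_add_distrib]

end UnitSteps

/-- A closed walk is even-visiting iff all of its up-crossing counts are even. -/
theorem even_visiting_iff_upcross_even (L : ℕ) (s : Fin (L + 1) → ℤ)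
    (hs : IsClosedWalk L s) :
    EvenVisiting L s ↔ ∀ j : ℤ, Even (upcross L s j) := by
  obtain ⟨⟨hstart, hstep⟩, hend⟩ := hs
  have hvisits : ∀ x ≠ 0, visits L s x = upcross L s x + upcross L s (x - 1) := fun x hx => by
    rw [visits_eq_upcross_add_downcross hstep (hend.trans_ne hx.symm),
      upcross_eq_downcross hstep (hstart.trans hend.symm) (x - 1)]
  constructor
  · intro heven
    obtain ⟨N, hN⟩ := exists_upcross_eq_zero_of_le_abs L s
    refine Int.forall_of_forall_le_abs_of_iff_sub_one (fun j (hj : N ≤ |j|) => by simp [hN j hj]) ?_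
    intro x hx
    rw [← Nat.even_add, ← hvisits x hx]
    exact heven x hx
  · intro hup x hx
    rw [hvisits x hx]
    exact (hup x).add (hup (x - 1))
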